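/- In a strongly connected directed graph containing cycles of two coprime lengths m and m' (gcd(m, m') = 1), for every pair of nodes i, j there exists K such that (A^k)_{ij} > 0 for all k ≥ K. -/
import Mathlib

/-- Stitching walks: positivity composes under matrix powers. -/
lemma pow_pos_trans {n : ℕ} (A : Matrix (Fin n) (Fin n) ℕ) {a b : ℕ} {i x j : Fin n}
    (ha : 0 < (A ^ a) i x) (hb : 0 < (A ^ b) x j) : 0 < (A ^ (a + b)) i j := by
  rw [pow_add, Matrix.mul_apply]
  have : (A ^ a) i x * (A ^ b) x j ≤ ∑ y, (A ^ a) i y * (A ^ b) y j :=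
    Finset.single_le_sum (f := fun y => (A ^ a) i y * (A ^ b) y j)
      (fun y _ => Nat.zero_le _) (Finset.mem_univ x)
  exact lt_of_lt_of_le (Nat.mul_pos ha hb) this

lemma pow_pos_cycle {n : ℕ} (A : Matrix (Fin n) (Fin n) ℕ) {m : ℕ} {w : Fin n}
    (h : 0 < (A ^ m) w w) : ∀ a : ℕ, 0 < (A ^ (a * m)) w w := by
  intro a
  induction a with
  | zero => simp [Matrix.one_apply]
  | succ a ih =>
    have := pow_pos_trans A ih h
    rwa [show a * m + m = (a + 1) * m by ring] at this

lemma chicken {m m' : ℕ} (hm : 1 ≤ m) (hm' : 1 ≤ m') (hcop : Nat.Coprime m m') :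
    ∀ t : ℕ, m * m' ≤ t → ∃ a b : ℕ, t = a * m + b * m' := by
  intro t ht
  rcases eq_or_lt_of_le hm with h1 | h1
  · exact ⟨t, 0, by simp [← h1]⟩
  rcases eq_or_lt_of_le hm' with h1' | h1'
  · exact ⟨0, t, by simp [← h1']⟩
  have hf := frobeniusNumber_pair hcop h1 h1'
  have : t ∈ AddSubmonoid.closure ({m, m'} : Set ℕ) := by
    by_contra hc
    have h2 := hf.2 hc
    have h3 : m + m' ≤ m * m' := Nat.add_le_mul h1 h1'
    omega
  rw [AddSubmonoid.mem_closure_pair] at this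
  obtain ⟨a, b, hab⟩ := this
  exact ⟨a, b, by simpa [smul_eq_mul, eq_comm] using hab⟩

/-- In a strongly connected digraph containing cycles of two coprime lengths m
and m', for every pair of nodes i, j all sufficiently large walk lengths are
realizable: ∃ K, ∀ k ≥ K, (A^k)_{ij} > 0. -/
theorem strongly_connected_coprime_cycles (n : ℕ) (A : Matrix (Fin n) (Fin n) ℕ)
    (hconn : ∀ i j : Fin n, ∃ k : ℕ, 0 < (A ^ k) i j)
    (m m' : ℕ) (hm : 1 ≤ m) (hm' : 1 ≤ m') (hcop : Nat.Coprime m m')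
    (hcyc : ∃ w : Fin n, 0 < (A ^ m) w w)
    (hcyc' : ∃ w' : Fin n, 0 < (A ^ m') w' w') :
    ∀ i j : Fin n, ∃ K : ℕ, ∀ k : ℕ, K ≤ k → 0 < (A ^ k) i j := by
  intro i j
  obtain ⟨w, hw⟩ := hcyc
  obtain ⟨w', hw'⟩ := hcyc'
  obtain ⟨p, hp⟩ := hconn i w
  obtain ⟨q, hq⟩ := hconn w w'
  obtain ⟨r, hr⟩ := hconn w' j
  refine ⟨p + q + r + m * m', fun k hk => ?_⟩
  obtain ⟨a, b, hab⟩ := chicken hm hm' hcop (k - (p + q + r)) (by omega)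
  have h1 : 0 < (A ^ (p + a * m)) i w := pow_pos_trans A hp (pow_pos_cycle A hw a)
  have h2 : 0 < (A ^ (p + a * m + q)) i w' := pow_pos_trans A h1 hq
  have h3 : 0 < (A ^ (p + a * m + q + b * m')) i w' :=
    pow_pos_trans A h2 (pow_pos_cycle A hw' b)
  have h4 : 0 < (A ^ (p + a * m + q + b * m' + r)) i j := pow_pos_trans A h3 hr
  rwa [show p + a * m + q + b * m' + r = k by omega] at h4
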